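/- (Core step of the second-round converse.) Let F be a finite field with q elements and L, M natural numbers. Let Ω be a probability space carrying random variables S : Ω → F^L uniformly distributed, A (valued in an arbitrary finite type), and B : Ω → F^M. Suppose S is independent of A, and suppose there exists a function h such that S = h(A, B) almost surely. Then L ≤ M. -/

import Mathlib

open MeasureTheory Finset
open scoped ENNReal

/-- Two (discrete) random tuples `f` and `g` are statistically independent:
the joint law of `(f, g)` is the product of the marginal laws, expressed pointwise. -/
def IndepRV {Ω A B : Type*} [MeasurableSpace Ω] (P : Measure Ω)
    (f : Ω → A) (g : Ω → B) : Prop :=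
  ∀ (a : A) (b : B), P (f ⁻¹' {a} ∩ g ⁻¹' {b}) = P (f ⁻¹' {a}) * P (g ⁻¹' {b})

/-- A finite family of (discrete) random variables is mutually independent:
the joint law factorizes as the product of the marginals, expressed pointwise. -/
def iIndepRV {Ω ι : Type*} [Fintype ι] {A : ι → Type*} [MeasurableSpace Ω]
    (P : Measure Ω) (f : ∀ i, Ω → A i) : Prop :=
  ∀ a : ∀ i, A i, P (⋂ i, f i ⁻¹' {a i}) = ∏ i, P (f i ⁻¹' {a i})

/-- A random variable valued in a finite type is uniformly distributed. -/
def UniformRV {Ω A : Type*} [Fintype A] [MeasurableSpace Ω] (P : Measure Ω)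
    (f : Ω → A) : Prop :=
  ∀ a : A, P (f ⁻¹' {a}) = (Fintype.card A : ℝ≥0∞)⁻¹

/-! Since `S` is uniform and independent of `A`, every value `s` of `S` occurs with positive
probability jointly with any atom `A = a` of positive mass; as `S = h (A, B)` almost surely,
`s` is then a value of `h a`. So `h a : F^M → F^L` is surjective, and `|F| ^ L ≤ |F| ^ M`. -/

lemma exists_measure_preimage_singleton_ne_zero {Ω α : Type*} [MeasurableSpace Ω]
    (P : Measure Ω) [IsProbabilityMeasure P] [Countable α] (f : Ω → α) :
    ∃ a, P (f ⁻¹' {a}) ≠ 0 := by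
  have hunion : P (⋃ a, f ⁻¹' {a}) ≠ 0 := by
    rw [← Set.preimage_iUnion, Set.iUnion_of_singleton, Set.preimage_univ, measure_univ]
    exact one_ne_zero
  obtain ⟨a, ha⟩ := exists_measure_pos_of_not_measure_iUnion_null hunion
  exact ⟨a, ha.ne'⟩

lemma UniformRV.measure_inter_ne_zero {Ω X Y : Type*} [MeasurableSpace Ω] [Fintype X]
    {P : Measure Ω} {S : Ω → X} {A : Ω → Y} (hunif : UniformRV P S) (hSA : IndepRV P S A)
    (s : X) {a : Y} (ha : P (A ⁻¹' {a}) ≠ 0) : P (S ⁻¹' {s} ∩ A ⁻¹' {a}) ≠ 0 := by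
  rw [hSA s a, hunif s]
  exact mul_ne_zero (ENNReal.inv_ne_zero.2 (ENNReal.natCast_ne_top _)) ha

lemma UniformRV.surjective_of_ae_eq {Ω X Y Z : Type*} [MeasurableSpace Ω] [Fintype X]
    {P : Measure Ω} {S : Ω → X} {A : Ω → Y} {B : Ω → Z} {h : Y → Z → X}
    (hunif : UniformRV P S) (hSA : IndepRV P S A) (hh : ∀ᵐ ω ∂P, S ω = h (A ω) (B ω))
    {a : Y} (ha : P (A ⁻¹' {a}) ≠ 0) : Function.Surjective (h a) := by
  intro s
  obtain ⟨ω, ⟨hS : S ω = s, hA : A ω = a⟩, hω⟩ :=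
    Measure.exists_mem_of_measure_ne_zero_of_ae (hunif.measure_inter_ne_zero hSA s ha)
      (ae_restrict_of_ae hh)
  exact ⟨B ω, by rw [← hA, ← hω, hS]⟩

lemma le_of_surjective_fin_fun {F : Type*} [Fintype F] [Nontrivial F] {L M : ℕ}
    {g : (Fin M → F) → (Fin L → F)} (hg : Function.Surjective g) : L ≤ M := by
  have hcard := Fintype.card_le_of_surjective g hg
  simp only [Fintype.card_fun, Fintype.card_fin] at hcard
  exact (pow_le_pow_iff_right₀ Fintype.one_lt_card).1 hcard

theorem second_round_converse_core_general
    (F : Type) [Field F] [Fintype F] (L M : ℕ)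
    (Ω : Type) [MeasurableSpace Ω] (P : Measure Ω) [IsProbabilityMeasure P]
    (At : Type) [Fintype At]
    (S : Ω → (Fin L → F)) (A : Ω → At) (B : Ω → (Fin M → F))
    (hunifS : UniformRV P S)
    (hSA : IndepRV P S A)
    (h : At → (Fin M → F) → (Fin L → F))
    (hh : ∀ᵐ ω ∂P, S ω = h (A ω) (B ω)) :
    L ≤ M := by
  obtain ⟨a, ha⟩ := exists_measure_preimage_singleton_ne_zero P A
  exact le_of_surjective_fin_fun (hunifS.surjective_of_ae_eq hSA hh ha)

/-- **Core step of the second-round converse.**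
Let `S : Ω → F^L` be uniform, `A` a random variable valued in an arbitrary finite type
with `S` independent of `A`, and `B : Ω → F^M`. If some function `h` satisfies
`S = h (A, B)` almost surely, then `L ≤ M`. -/
theorem second_round_converse_core
    (F : Type) [Field F] [Fintype F] (q L M : ℕ) (hq : Fintype.card F = q)
    (Ω : Type) [MeasurableSpace Ω] (P : Measure Ω) [IsProbabilityMeasure P]
    (At : Type) [Fintype At]
    (S : Ω → (Fin L → F)) (A : Ω → At) (B : Ω → (Fin M → F))
    (hunifS : UniformRV P S)
    (hSA : IndepRV P S A)
    (h : At → (Fin M → F) → (Fin L → F))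
    (hh : ∀ᵐ ω ∂P, S ω = h (A ω) (B ω)) :
    L ≤ M :=
  second_round_converse_core_general F L M Ω P At S A B hunifS hSA h hh
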